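/- A bijective bounded linear operator S on H ⊕ ℂ preserves the form 𝒜 (i.e. S ∈ G) if and only if there exist θ ∈ ℝ, ξ ∈ H and a unitary operator U on H such that, with a = Real.sqrt (1 + ‖ξ‖²) and A the operator A x = x + ((a−1)/‖ξ‖²)·⟨x,ξ⟩·ξ (interpreted as A = I when ξ = 0), one has S(x,z) = exp(iθ)·(U(A x) + z·U ξ, ⟨x,ξ⟩ + a·z) for all (x,z) ∈ H ⊕ ℂ. -/

import Mathlib

/-!
Multiplying `S` by a phase makes the `ℂ`-entry of `S (0,1) = (w, a)` positive. Writing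
`S (x,0) = (T₁ x, ⟪ξ, x⟫)`, invariance of `𝒜` gives `⟪T₁ x, T₁ y⟫ = ⟪x, y⟫ + ⟪x, ξ⟫⟪ξ, y⟫`, which is
also `⟪A x, A y⟫` for the rank-one perturbation `A = I + c |ξ⟩⟨ξ|` of the statement; hence
`U = T₁ A⁻¹` is isometric, and it is onto because `S` is. Orthogonality of `S (x,0)` and `S (0,1)`
forces `A U⁻¹ w = a ξ`, and `𝒜 (S (0,1), S (0,1)) = -1` then forces `a = √(1 + ‖ξ‖²)` and `w = U ξ`.
Conversely, `(x, z) ↦ (A x + z ξ, ⟪ξ, x⟫ + a z)` preserves `𝒜` because `a² - ‖ξ‖² = 1`.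
-/

open scoped InnerProductSpace ComplexConjugate

noncomputable section

variable {H : Type*} [NormedAddCommGroup H] [InnerProductSpace ℂ H]

/-- The vector `(x, z)` of the Hilbert space direct sum `H ⊕ ℂ`. -/
def mkE (x : H) (z : ℂ) : WithLp 2 (H × ℂ) := (WithLp.equiv 2 (H × ℂ)).symm (x, z)

/-- The sesquilinear form `𝒜((x,λ),(y,μ)) = ⟨x,y⟩ − λ·conj(μ)`, where `⟨·,·⟩` is linear in the
first variable and conjugate-linear in the second (so `⟨x,y⟩ = ⟪y,x⟫_ℂ` in Mathlib's
convention). -/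
def formA (v w : WithLp 2 (H × ℂ)) : ℂ :=
  ⟪(WithLp.equiv 2 (H × ℂ) w).1, (WithLp.equiv 2 (H × ℂ) v).1⟫_ℂ
    - (WithLp.equiv 2 (H × ℂ) v).2 * conj (WithLp.equiv 2 (H × ℂ) w).2

section RankOne

variable {𝕜 E : Type*} [RCLike 𝕜] [NormedAddCommGroup E] [InnerProductSpace 𝕜 E]

def idAddRankOne (ξ : E) (c : 𝕜) : E →L[𝕜] E :=
  ContinuousLinearMap.id 𝕜 E + (c • innerSL 𝕜 ξ).smulRight ξ

lemma idAddRankOne_apply (ξ x : E) (c : 𝕜) : idAddRankOne ξ c x = x + (c * ⟪ξ, x⟫_𝕜) • ξ :=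
  rfl

lemma idAddRankOne_idAddRankOne (ξ x : E) (c d : 𝕜) :
    idAddRankOne ξ c (idAddRankOne ξ d x) = idAddRankOne ξ (c + d + c * d * ⟪ξ, ξ⟫_𝕜) x := by
  simp only [idAddRankOne_apply, inner_add_right, inner_smul_right, add_assoc, ← add_smul]
  congr 2
  ring

lemma idAddRankOne_idAddRankOne_of_eq_zero (ξ x : E) (c d : 𝕜)
    (h : c + d + c * d * ⟪ξ, ξ⟫_𝕜 = 0) : idAddRankOne ξ c (idAddRankOne ξ d x) = x := by
  rw [idAddRankOne_idAddRankOne, h, idAddRankOne_apply, zero_mul, zero_smul, add_zero]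

lemma inner_idAddRankOne_left (ξ x y : E) (c : 𝕜) :
    ⟪idAddRankOne ξ c x, y⟫_𝕜 = ⟪x, idAddRankOne ξ (conj c) y⟫_𝕜 := by
  simp only [idAddRankOne_apply, inner_add_left, inner_add_right, inner_smul_left,
    inner_smul_right, map_mul, inner_conj_symm]
  ring

lemma inner_idAddRankOne_right (ξ x y : E) (c : 𝕜) :
    ⟪x, idAddRankOne ξ c y⟫_𝕜 = ⟪x, y⟫_𝕜 + c * ⟪x, ξ⟫_𝕜 * ⟪ξ, y⟫_𝕜 := by
  rw [idAddRankOne_apply, inner_add_right, inner_smul_right]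
  ring

lemma mem_unitary_of_inner_map_map [CompleteSpace E] (U : E →L[𝕜] E)
    (hU : ∀ x y, ⟪U x, U y⟫_𝕜 = ⟪x, y⟫_𝕜) (hsurj : Function.Surjective U) :
    U ∈ unitary (E →L[𝕜] E) :=
  (Unitary.linearIsometryEquiv.symm
    (LinearIsometryEquiv.ofSurjective ((U : E →ₗ[𝕜] E).isometryOfInner hU) hsurj)).property

end RankOne

section BoostScalars

variable {V : Type*} [NormedAddCommGroup V]

/-- The paper's `a`, and `boostCoeff` the coefficient `c` of `A = I + c |ξ⟩⟨ξ|`. At `ξ = 0`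
division by zero makes `c = 0`, so `A = I` there, as the paper intends. -/
def boostScale (ξ : V) : ℝ := √(1 + ‖ξ‖ ^ 2)

def boostCoeff (ξ : V) : ℝ := (boostScale ξ - 1) / ‖ξ‖ ^ 2

lemma boostScale_pos (ξ : V) : 0 < boostScale ξ := Real.sqrt_pos.2 (by positivity)

lemma boostScale_sq (ξ : V) : boostScale ξ ^ 2 = 1 + ‖ξ‖ ^ 2 := Real.sq_sqrt (by positivity)

lemma boostCoeff_mul_norm_sq (ξ : V) : boostCoeff ξ * ‖ξ‖ ^ 2 = boostScale ξ - 1 := by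
  rcases eq_or_ne ξ 0 with rfl | hξ
  · simp [boostScale]
  · exact div_mul_cancel₀ _ (by positivity)

lemma two_mul_boostCoeff_add (ξ : V) (hξ : ξ ≠ 0) :
    2 * boostCoeff ξ + boostCoeff ξ ^ 2 * ‖ξ‖ ^ 2 = 1 := by
  apply mul_right_cancel₀ (by positivity : ‖ξ‖ ^ 2 ≠ 0)
  linear_combination (2 + boostCoeff ξ * ‖ξ‖ ^ 2 + boostScale ξ - 1) * boostCoeff_mul_norm_sq ξ
    + boostScale_sq ξ

end BoostScalars

lemma inner_self_eq_ofReal_norm_sq (ξ : H) : ⟪ξ, ξ⟫_ℂ = (‖ξ‖ : ℂ) ^ 2 := by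
  simp [inner_self_eq_norm_sq_to_K]

lemma one_add_boostCoeff_mul_inner_self (ξ : H) :
    1 + (boostCoeff ξ : ℂ) * ⟪ξ, ξ⟫_ℂ = boostScale ξ := by
  rw [inner_self_eq_ofReal_norm_sq]
  exact_mod_cast (by linear_combination boostCoeff_mul_norm_sq ξ :
    1 + boostCoeff ξ * ‖ξ‖ ^ 2 = boostScale ξ)

lemma boostCoeff_add_inv (ξ : H) :
    (boostCoeff ξ : ℂ) + (-boostCoeff ξ / boostScale ξ : ℝ)
      + (boostCoeff ξ : ℂ) * (-boostCoeff ξ / boostScale ξ : ℝ) * ⟪ξ, ξ⟫_ℂ = 0 := by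
  have ha := (boostScale_pos ξ).ne'
  have h : boostCoeff ξ + -boostCoeff ξ / boostScale ξ
      + boostCoeff ξ * (-boostCoeff ξ / boostScale ξ) * ‖ξ‖ ^ 2 = 0 := by
    field_simp
    linear_combination -boostCoeff ξ * boostCoeff_mul_norm_sq ξ
  rw [inner_self_eq_ofReal_norm_sq]
  exact_mod_cast h

def boost (ξ : H) : H ≃L[ℂ] H :=
  .equivOfInverse (idAddRankOne ξ (boostCoeff ξ : ℂ))
    (idAddRankOne ξ ((-boostCoeff ξ / boostScale ξ : ℝ) : ℂ))
    (fun _ => idAddRankOne_idAddRankOne_of_eq_zero _ _ _ _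
      (by linear_combination boostCoeff_add_inv ξ))
    (fun _ => idAddRankOne_idAddRankOne_of_eq_zero _ _ _ _ (boostCoeff_add_inv ξ))

lemma boost_apply (ξ x : H) :
    boost ξ x = x + ((boostCoeff ξ : ℂ) * ⟪ξ, x⟫_ℂ) • ξ := rfl

lemma boost_self (ξ : H) : boost ξ ξ = (boostScale ξ : ℂ) • ξ := by
  rw [boost_apply, ← one_add_boostCoeff_mul_inner_self, add_smul, one_smul]

lemma boost_symm_self (ξ : H) : (boost ξ).symm ξ = ((boostScale ξ)⁻¹ : ℂ) • ξ := by
  have ha : (boostScale ξ : ℂ) ≠ 0 := by exact_mod_cast (boostScale_pos ξ).ne'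
  rw [ContinuousLinearEquiv.symm_apply_eq, map_smul, boost_self, smul_smul, inv_mul_cancel₀ ha,
    one_smul]

lemma inner_boost_left (ξ x y : H) : ⟪boost ξ x, y⟫_ℂ = ⟪x, boost ξ y⟫_ℂ := by
  simp only [boost_apply, ← idAddRankOne_apply, inner_idAddRankOne_left, Complex.conj_ofReal]

lemma inner_self_boost (ξ x : H) : ⟪ξ, boost ξ x⟫_ℂ = boostScale ξ * ⟪ξ, x⟫_ℂ := by
  rw [← one_add_boostCoeff_mul_inner_self, boost_apply, ← idAddRankOne_apply,
    inner_idAddRankOne_right]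
  ring

lemma inner_boost_self (ξ x : H) : ⟪boost ξ x, ξ⟫_ℂ = boostScale ξ * ⟪x, ξ⟫_ℂ := by
  rw [inner_boost_left, boost_self, inner_smul_right]

lemma inner_boost_boost (ξ x y : H) :
    ⟪boost ξ x, boost ξ y⟫_ℂ = ⟪x, y⟫_ℂ + ⟪x, ξ⟫_ℂ * ⟪ξ, y⟫_ℂ := by
  rw [inner_boost_left, boost_apply, boost_apply, ← idAddRankOne_apply, ← idAddRankOne_apply,
    idAddRankOne_idAddRankOne, inner_idAddRankOne_right]
  rcases eq_or_ne ξ 0 with rfl | hξ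
  · simp
  have h : 2 * (boostCoeff ξ : ℂ) + (boostCoeff ξ : ℂ) ^ 2 * (‖ξ‖ : ℂ) ^ 2 = 1 := by
    exact_mod_cast two_mul_boostCoeff_add ξ hξ
  rw [inner_self_eq_ofReal_norm_sq]
  linear_combination ⟪x, ξ⟫_ℂ * ⟪ξ, y⟫_ℂ * h

section MkE

variable {M : Type*}

lemma exists_eq_mkE (v : WithLp 2 (M × ℂ)) : ∃ x z, v = mkE x z := ⟨_, _, rfl⟩

lemma mkE_inj {x y : M} {z w : ℂ} : mkE x z = mkE y w ↔ x = y ∧ z = w := by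
  simp [mkE]

lemma mkE_add [AddCommGroup M] (x y : M) (z w : ℂ) : mkE x z + mkE y w = mkE (x + y) (z + w) :=
  rfl

lemma mkE_smul [AddCommGroup M] [Module ℂ M] (c : ℂ) (x : M) (z : ℂ) :
    c • mkE x z = mkE (c • x) (c * z) :=
  rfl

lemma mkE_eq_add_smul [AddCommGroup M] [Module ℂ M] (x : M) (z : ℂ) :
    mkE x z = mkE x 0 + z • mkE 0 1 := by
  rw [mkE_smul, mkE_add, smul_zero, mul_one, add_zero, zero_add]

end MkE

lemma formA_mkE (x y : H) (z w : ℂ) : formA (mkE x z) (mkE y w) = ⟪y, x⟫_ℂ - z * conj w := rfl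

lemma norm_sq_of_formA_self_eq_neg_one {x : H} {z : ℂ} (h : formA (mkE x z) (mkE x z) = -1) :
    ‖z‖ ^ 2 = 1 + ‖x‖ ^ 2 := by
  rw [formA_mkE, inner_self_eq_ofReal_norm_sq, Complex.mul_conj'] at h
  exact_mod_cast (by linear_combination -h : (‖z‖ : ℂ) ^ 2 = 1 + (‖x‖ : ℂ) ^ 2)

lemma ne_zero_of_formA_self_eq_neg_one {x : H} {z : ℂ} (h : formA (mkE x z) (mkE x z) = -1) :
    z ≠ 0 := by
  rintro rfl
  have h' := norm_sq_of_formA_self_eq_neg_one h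
  rw [norm_zero] at h'
  nlinarith [sq_nonneg ‖x‖]

lemma formA_smul_of_norm_eq_one {c : ℂ} (hc : ‖c‖ = 1) (v w : WithLp 2 (H × ℂ)) :
    formA (c • v) (c • w) = formA v w := by
  obtain ⟨x, z, rfl⟩ := exists_eq_mkE v
  obtain ⟨y, u, rfl⟩ := exists_eq_mkE w
  have hc' : conj c * c = 1 := by rw [mul_comm, Complex.mul_conj', hc]; norm_num
  simp only [mkE_smul, formA_mkE, inner_smul_left, inner_smul_right, map_mul]
  linear_combination (⟪y, x⟫_ℂ - z * conj u) * hc'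

lemma formA_boost (ξ x y : H) (z u : ℂ) :
    formA (mkE (boost ξ x + z • ξ) (⟪ξ, x⟫_ℂ + boostScale ξ * z))
      (mkE (boost ξ y + u • ξ) (⟪ξ, y⟫_ℂ + boostScale ξ * u)) = formA (mkE x z) (mkE y u) := by
  have ha : (boostScale ξ : ℂ) ^ 2 = 1 + (‖ξ‖ : ℂ) ^ 2 := by exact_mod_cast boostScale_sq ξ
  simp only [formA_mkE, inner_add_left, inner_add_right, inner_smul_left, inner_smul_right,
    inner_boost_boost, inner_boost_self, inner_self_boost, inner_self_eq_ofReal_norm_sq, map_add,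
    map_mul, Complex.conj_ofReal, inner_conj_symm]
  linear_combination -(z * conj u) * ha

def PreservesFormA (S : WithLp 2 (H × ℂ) →L[ℂ] WithLp 2 (H × ℂ)) : Prop :=
  ∀ v w, formA (S v) (S w) = formA v w

lemma PreservesFormA.smul {S : WithLp 2 (H × ℂ) →L[ℂ] WithLp 2 (H × ℂ)} (hS : PreservesFormA S)
    {c : ℂ} (hc : ‖c‖ = 1) : PreservesFormA (c • S) := fun v w => by
  rw [smul_apply, smul_apply, formA_smul_of_norm_eq_one hc, hS]

lemma exists_apply_mkE_zero_eq [CompleteSpace H] (T : WithLp 2 (H × ℂ) →L[ℂ] WithLp 2 (H × ℂ)) :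
    ∃ (T₁ : H →L[ℂ] H) (ξ : H), ∀ x, T (mkE x 0) = mkE (T₁ x) ⟪ξ, x⟫_ℂ := by
  let P := WithLp.prodContinuousLinearEquiv 2 ℂ H ℂ
  let Tinl : H →L[ℂ] H × ℂ := (P : WithLp 2 (H × ℂ) →L[ℂ] H × ℂ) ∘L T
    ∘L (P.symm : H × ℂ →L[ℂ] WithLp 2 (H × ℂ)) ∘L ContinuousLinearMap.inl ℂ H ℂ
  refine ⟨ContinuousLinearMap.fst ℂ H ℂ ∘L Tinl,
    (InnerProductSpace.toDual ℂ H).symm (ContinuousLinearMap.snd ℂ H ℂ ∘L Tinl), fun x => ?_⟩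
  rw [InnerProductSpace.toDual_symm_apply]
  rfl

section Forward

variable {T : WithLp 2 (H × ℂ) →L[ℂ] WithLp 2 (H × ℂ)} {T₁ : H →L[ℂ] H} {ξ : H}

lemma PreservesFormA.inner_apply_apply (hT : PreservesFormA T)
    (hT₁ : ∀ x, T (mkE x 0) = mkE (T₁ x) ⟪ξ, x⟫_ℂ) (x y : H) :
    ⟪T₁ x, T₁ y⟫_ℂ = ⟪x, y⟫_ℂ + ⟪x, ξ⟫_ℂ * ⟪ξ, y⟫_ℂ := by
  have h := hT (mkE y 0) (mkE x 0)
  rw [hT₁, hT₁, formA_mkE, formA_mkE, inner_conj_symm] at h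
  linear_combination h

lemma PreservesFormA.inner_apply_of_apply_mkE_zero_one (hT : PreservesFormA T)
    (hT₁ : ∀ x, T (mkE x 0) = mkE (T₁ x) ⟪ξ, x⟫_ℂ) {w : H} {c : ℂ} (h01 : T (mkE 0 1) = mkE w c)
    (x : H) : ⟪w, T₁ x⟫_ℂ = conj c * ⟪ξ, x⟫_ℂ := by
  have h := hT (mkE x 0) (mkE 0 1)
  rw [hT₁, h01, formA_mkE, formA_mkE] at h
  simp only [inner_zero_left, zero_mul, sub_zero] at h
  linear_combination h

lemma PreservesFormA.surjective_of_surjective (hT : PreservesFormA T)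
    (hT₁ : ∀ x, T (mkE x 0) = mkE (T₁ x) ⟪ξ, x⟫_ℂ) (hsurj : Function.Surjective T) :
    Function.Surjective T₁ := by
  intro y
  obtain ⟨p, hp⟩ := hsurj (mkE y 0)
  obtain ⟨r, hr⟩ := hsurj (mkE 0 1)
  obtain ⟨p₁, p₂, rfl⟩ := exists_eq_mkE p
  obtain ⟨r₁, r₂, rfl⟩ := exists_eq_mkE r
  have hr₂ : r₂ ≠ 0 := ne_zero_of_formA_self_eq_neg_one (by rw [← hT, hr]; simp [formA_mkE])
  set μ := p₂ / r₂
  have hkill : mkE p₁ p₂ - μ • mkE r₁ r₂ = mkE (p₁ - μ • r₁) 0 := by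
    change mkE (p₁ - μ • r₁) (p₂ - μ * r₂) = _
    rw [div_mul_cancel₀ _ hr₂, sub_self]
  have h := congrArg T hkill
  rw [map_sub, map_smul, hp, hr, hT₁] at h
  change mkE (y - μ • 0) (0 - μ * 1) = _ at h
  exact ⟨p₁ - μ • r₁, by simpa using (mkE_inj.1 h).1.symm⟩

theorem PreservesFormA.exists_of_apply_mkE_zero_one [CompleteSpace H] (hT : PreservesFormA T)
    (hsurj : Function.Surjective T) {w : H} {a : ℝ} (ha : 0 < a) (h01 : T (mkE 0 1) = mkE w a) :
    ∃ (ξ : H) (U : H →L[ℂ] H), U ∈ unitary (H →L[ℂ] H) ∧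
      ∀ x z, T (mkE x z) = mkE (U (boost ξ x) + z • U ξ) (⟪ξ, x⟫_ℂ + boostScale ξ * z) := by
  obtain ⟨T₁, ξ, hT₁⟩ := exists_apply_mkE_zero_eq T
  set U : H →L[ℂ] H := T₁ ∘L ((boost ξ).symm : H →L[ℂ] H)
  have hUA (x : H) : U (boost ξ x) = T₁ x := by simp [U]
  have hU_inner (x y : H) : ⟪U x, U y⟫_ℂ = ⟪x, y⟫_ℂ := by
    rw [← (boost ξ).apply_symm_apply x, ← (boost ξ).apply_symm_apply y, hUA, hUA,
      hT.inner_apply_apply hT₁, inner_boost_boost]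
  have hU_surj : Function.Surjective U := fun y =>
    let ⟨x, hx⟩ := hT.surjective_of_surjective hT₁ hsurj y
    ⟨boost ξ x, by rw [hUA, hx]⟩
  have hU := mem_unitary_of_inner_map_map U hU_inner hU_surj
  obtain ⟨v, rfl⟩ := hU_surj w
  have hv : boost ξ v = (a : ℂ) • ξ := ext_inner_right ℂ fun x => by
    rw [inner_boost_left, ← hU_inner, hUA, hT.inner_apply_of_apply_mkE_zero_one hT₁ h01,
      inner_smul_left, Complex.conj_ofReal]
  have hv' : v = ((a / boostScale ξ : ℝ) : ℂ) • ξ := by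
    rw [← (boost ξ).symm_apply_apply v, hv, map_smul, boost_symm_self, smul_smul]
    push_cast
    ring_nf
  have ha_eq : a = boostScale ξ := by
    have h := norm_sq_of_formA_self_eq_neg_one (by rw [← h01, hT]; simp [formA_mkE])
    rw [ContinuousLinearMap.norm_map_of_mem_unitary hU, hv', norm_smul, Complex.norm_real,
      Complex.norm_real, Real.norm_of_nonneg ha.le,
      Real.norm_of_nonneg (div_pos ha (boostScale_pos ξ)).le] at h
    have ha' := (boostScale_pos ξ).ne'
    field_simp at h
    exact (sq_eq_sq₀ ha.le (boostScale_pos ξ).le).1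
      (by linear_combination h - a ^ 2 * boostScale_sq ξ)
  obtain rfl : v = ξ := by
    rw [hv', ha_eq, div_self (boostScale_pos ξ).ne', Complex.ofReal_one, one_smul]
  refine ⟨v, U, hU, fun x z => ?_⟩
  rw [mkE_eq_add_smul, map_add, map_smul, hT₁, h01, hUA, ha_eq, mkE_smul, mkE_add, mul_comm]

end Forward

theorem PreservesFormA.exists_of_surjective [CompleteSpace H]
    {S : WithLp 2 (H × ℂ) →L[ℂ] WithLp 2 (H × ℂ)} (hS : PreservesFormA S)
    (hsurj : Function.Surjective S) :
    ∃ (θ : ℝ) (ξ : H) (U : H →L[ℂ] H), U ∈ unitary (H →L[ℂ] H) ∧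
      ∀ x z, S (mkE x z) = Complex.exp (θ * Complex.I) •
        mkE (U (boost ξ x) + z • U ξ) (⟪ξ, x⟫_ℂ + boostScale ξ * z) := by
  obtain ⟨w, c, h01⟩ := exists_eq_mkE (S (mkE 0 1))
  have hc : c ≠ 0 := ne_zero_of_formA_self_eq_neg_one (by rw [← h01, hS]; simp [formA_mkE])
  set e := Complex.exp (c.arg * Complex.I)
  have he : e ≠ 0 := Complex.exp_ne_zero _
  have he_norm : ‖e⁻¹‖ = 1 := by rw [norm_inv, Complex.norm_exp_ofReal_mul_I, inv_one]
  have hT01 : (e⁻¹ • S) (mkE 0 1) = mkE (e⁻¹ • w) (‖c‖ : ℝ) := by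
    rw [smul_apply, h01, mkE_smul]
    congr 1
    rw [inv_mul_eq_iff_eq_mul₀ he, mul_comm e]
    exact (Complex.norm_mul_exp_arg_mul_I c).symm
  have hT_surj : Function.Surjective (e⁻¹ • S) := fun v =>
    let ⟨u, hu⟩ := hsurj (e • v)
    ⟨u, by rw [smul_apply, hu, inv_smul_smul₀ he]⟩
  obtain ⟨ξ, U, hU, hT⟩ :=
    (hS.smul he_norm).exists_of_apply_mkE_zero_one hT_surj (norm_pos_iff.2 hc) hT01
  refine ⟨c.arg, ξ, U, hU, fun x z => ?_⟩
  rw [← hT, smul_apply, smul_inv_smul₀ he]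

theorem preservesFormA_of_apply_mkE [CompleteSpace H]
    {S : WithLp 2 (H × ℂ) →L[ℂ] WithLp 2 (H × ℂ)} {θ : ℝ} {ξ : H} {U : H →L[ℂ] H}
    (hU : U ∈ unitary (H →L[ℂ] H))
    (hS : ∀ x z, S (mkE x z) = Complex.exp (θ * Complex.I) •
      mkE (U (boost ξ x) + z • U ξ) (⟪ξ, x⟫_ℂ + boostScale ξ * z)) :
    PreservesFormA S := by
  intro v w
  obtain ⟨x, z, rfl⟩ := exists_eq_mkE v
  obtain ⟨y, u, rfl⟩ := exists_eq_mkE w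
  rw [hS, hS, formA_smul_of_norm_eq_one (Complex.norm_exp_ofReal_mul_I θ), ← map_smul, ← map_add,
    ← map_smul, ← map_add, formA_mkE,
    ContinuousLinearMap.inner_map_map_of_mem_unitary hU, ← formA_mkE, formA_boost]

theorem stmt0 [CompleteSpace H]
    (S : WithLp 2 (H × ℂ) →L[ℂ] WithLp 2 (H × ℂ)) (hS : Function.Bijective S) :
    (∀ v w : WithLp 2 (H × ℂ), formA (S v) (S w) = formA v w) ↔
      ∃ (θ : ℝ) (ξ : H) (U : H →L[ℂ] H), U ∈ unitary (H →L[ℂ] H) ∧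
        ∀ (x : H) (z : ℂ),
          S (mkE x z) =
            Complex.exp (θ * Complex.I) •
              mkE
                (U (x + ((((Real.sqrt (1 + ‖ξ‖ ^ 2) - 1) / ‖ξ‖ ^ 2 : ℝ) : ℂ) * ⟪ξ, x⟫_ℂ) • ξ)
                   + z • U ξ)
                (⟪ξ, x⟫_ℂ + (Real.sqrt (1 + ‖ξ‖ ^ 2) : ℝ) * z) :=
  ⟨fun h => PreservesFormA.exists_of_surjective h hS.2,
    fun ⟨_, _, _, hU, h⟩ => preservesFormA_of_apply_mkE hU h⟩

end
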